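/- Fix p ∈ (1,∞), n ≥ 1, and γ ∈ [0,1). Let E ⊊ ℝ^{n+1} be nonempty. If E is γ-FIT parabolic weakly porous, then E has Lebesgue measure zero. -/

import Mathlib

open MeasureTheory Set Filter ENNReal NNReal

noncomputable section

/-- The (half-open) spatial cube of center `x` and edge length `2L`. -/
def pQ (n : ℕ) (x : Fin n → ℝ) (L : ℝ) : Set (Fin n → ℝ) :=
  Set.pi Set.univ fun i => Ico (x i - L) (x i + L)

/-- The lower part `R⁻(γ)` of the parabolic rectangle of center `(x,t)` and
edge length `L`. -/
def pRm (n : ℕ) (p γ : ℝ) (x : Fin n → ℝ) (t L : ℝ) : Set ((Fin n → ℝ) × ℝ) :=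
  pQ n x L ×ˢ Ico (t - L ^ p) (t - γ * L ^ p)

/-- The upper part `R⁺(γ)` of the parabolic rectangle. -/
def pRp (n : ℕ) (p γ : ℝ) (x : Fin n → ℝ) (t L : ℝ) : Set ((Fin n → ℝ) × ℝ) :=
  pQ n x L ×ˢ Ico (t + γ * L ^ p) (t + L ^ p)

/-- The shifted part `R⁺⁺(γ)` of the parabolic rectangle. -/
def pRpp (n : ℕ) (p γ : ℝ) (x : Fin n → ℝ) (t L : ℝ) : Set ((Fin n → ℝ) × ℝ) :=
  pQ n x L ×ˢ Ico (t + (1 + 2 * γ) * L ^ p) (t + (2 + γ) * L ^ p)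

/-- The `PBLO⁻_γ(ℝ^{n+1})` seminorm. -/
def pbloNorm (n : ℕ) (p γ : ℝ) (f : (Fin n → ℝ) × ℝ → ℝ) : ℝ≥0∞ :=
  ⨆ (x : Fin n → ℝ) (t : ℝ) (L : ℝ) (_ : 0 < L),
    (volume (pRm n p γ x t L))⁻¹ *
        (∫⁻ z in pRm n p γ x t L,
          ENNReal.ofReal
            (max (f z - essInf f (volume.restrict (pRp n p γ x t L))) 0)) +
      (volume (pRpp n p γ x t L))⁻¹ *
        (∫⁻ z in pRpp n p γ x t L,
          ENNReal.ofReal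
            (max (essInf f (volume.restrict (pRp n p γ x t L)) - f z) 0))

/-- `f ∈ PBLO⁻_γ(ℝ^{n+1})`. -/
def MemPBLOminus (n : ℕ) (p γ : ℝ) (f : (Fin n → ℝ) × ℝ → ℝ) : Prop :=
  LocallyIntegrable f volume ∧ pbloNorm n p γ f < ⊤

/-- The parabolic Muckenhoupt `A₁⁺(γ)` constant with time lag. -/
def parA1Const (n : ℕ) (p γ : ℝ) (ω : (Fin n → ℝ) × ℝ → ℝ) : ℝ≥0∞ :=
  ⨆ (x : Fin n → ℝ) (t : ℝ) (L : ℝ) (_ : 0 < L),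
    ((volume (pRm n p γ x t L))⁻¹ *
        ∫⁻ z in pRm n p γ x t L, ENNReal.ofReal (ω z)) /
      essInf (fun z => ENNReal.ofReal (ω z)) (volume.restrict (pRp n p γ x t L))

/-- `ω ∈ A₁⁺(γ)`: a weight (nonnegative, locally integrable, positive a.e.)
with finite parabolic `A₁⁺(γ)` constant. -/
def IsParA1plusWeight (n : ℕ) (p γ : ℝ) (ω : (Fin n → ℝ) × ℝ → ℝ) : Prop :=
  LocallyIntegrable ω volume ∧ (∀ z, 0 ≤ ω z) ∧
    (∀ᵐ z ∂(volume : Measure ((Fin n → ℝ) × ℝ)), 0 < ω z) ∧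
    parA1Const n p γ ω < ⊤

/-- `P` is a parabolic dyadic subrectangle (of some generation `j`) of the
set `R` (one of the parts of a parabolic rectangle of edge length `L`):
it is a half-open rectangle contained in `R` whose spatial edge is `L/2^j`
and whose temporal length lies in
`[(1−γ)L^p/2^{pj+1}, (1−γ)L^p/2^{pj}]`. -/
def IsParDyadicRect (n : ℕ) (p γ L : ℝ) (R P : Set ((Fin n → ℝ) × ℝ)) : Prop :=
  P ⊆ R ∧ ∃ (j : ℕ) (y : Fin n → ℝ) (s τ : ℝ),
    P = (Set.pi Set.univ fun i => Ico (y i) (y i + L / 2 ^ j)) ×ˢ Ico s (s + τ) ∧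
    (1 - γ) * L ^ p / (2 : ℝ) ^ (p * (j : ℝ)) / 2 ≤ τ ∧
    τ ≤ (1 - γ) * L ^ p / (2 : ℝ) ^ (p * (j : ℝ))

/-- The volume `|𝓜(R⁺(γ))|` of a largest `E`-free parabolic dyadic
subrectangle of `R⁺(γ)` (as a supremum of volumes). -/
def maxFreeVol (n : ℕ) (p γ : ℝ) (E : Set ((Fin n → ℝ) × ℝ))
    (x : Fin n → ℝ) (t L : ℝ) : ℝ≥0∞ :=
  ⨆ (P : Set ((Fin n → ℝ) × ℝ))
    (_ : IsParDyadicRect n p γ L (pRp n p γ x t L) P) (_ : P ∩ E = ∅),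
    volume P

/-- `E` is `γ`-FIT parabolic weakly porous: there are `c, δ ∈ (0,1)` such
that every parabolic rectangle `R` admits finitely many pairwise disjoint
`E`-free parabolic dyadic subrectangles `P₁, …, P_N` of `R⁻(γ)` with
`|P_j| ≥ δ|𝓜(R⁺(γ))|` for each `j` and `Σ_j |P_j| ≥ c|R⁻(γ)|`. -/
def FITParWeaklyPorous (n : ℕ) (p γ : ℝ) (E : Set ((Fin n → ℝ) × ℝ)) : Prop :=
  ∃ c δ : ℝ, c ∈ Ioo (0 : ℝ) 1 ∧ δ ∈ Ioo (0 : ℝ) 1 ∧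
    ∀ (x : Fin n → ℝ) (t L : ℝ), 0 < L →
      ∃ (N : ℕ) (P : Fin N → Set ((Fin n → ℝ) × ℝ)),
        0 < N ∧
        (∀ i, IsParDyadicRect n p γ L (pRm n p γ x t L) (P i)) ∧
        (∀ i, P i ∩ E = ∅) ∧
        Set.univ.PairwiseDisjoint P ∧
        (∀ i, ENNReal.ofReal δ * maxFreeVol n p γ E x t L ≤ volume (P i)) ∧
        ENNReal.ofReal c * volume (pRm n p γ x t L) ≤ ∑ i, volume (P i)


/-! ### Auxiliary material: the parabolic metric and a Vitali family -/

section ParAux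

open Metric

lemma rpow_inv_subadd {p : ℝ} (hp : 1 ≤ p) {a b : ℝ} (ha : 0 ≤ a) (hb : 0 ≤ b) :
    (a + b) ^ p⁻¹ ≤ a ^ p⁻¹ + b ^ p⁻¹ := by
  have hp0 : 0 < p := lt_of_lt_of_le one_pos hp
  have e : ∀ x : NNReal, (x ^ p⁻¹) ^ p = x := fun x => by
    rw [← NNReal.rpow_mul, inv_mul_cancel₀ hp0.ne', NNReal.rpow_one]
  have h := NNReal.rpow_add_rpow_le_add (a.toNNReal ^ p⁻¹) (b.toNNReal ^ p⁻¹) hp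
  rw [e, e, one_div] at h
  have h2 := NNReal.coe_le_coe.2 h
  simpa [NNReal.coe_rpow, Real.coe_toNNReal _ ha, Real.coe_toNNReal _ hb] using h2

variable {n : ℕ} {p : ℝ}

/-- The parabolic distance on `ℝ^n × ℝ`. -/
def parDist (p : ℝ) (z w : (Fin n → ℝ) × ℝ) : ℝ :=
  max (dist z.1 w.1) (|z.2 - w.2| ^ p⁻¹)

lemma parDist_self (hp : 1 ≤ p) (z : (Fin n → ℝ) × ℝ) : parDist p z z = 0 := by
  have h0 : (0:ℝ) ^ p⁻¹ = 0 :=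
    Real.zero_rpow (by positivity)
  simp [parDist, h0]

lemma parDist_comm (z w : (Fin n → ℝ) × ℝ) : parDist p z w = parDist p w z := by
  simp [parDist, dist_comm, abs_sub_comm]

lemma parDist_triangle (hp : 1 ≤ p) (x y z : (Fin n → ℝ) × ℝ) :
    parDist p x z ≤ parDist p x y + parDist p y z := by
  have hp0 : 0 < p := lt_of_lt_of_le one_pos hp
  rcases max_cases (dist x.1 z.1) (|x.2 - z.2| ^ p⁻¹) with ⟨h, _⟩ | ⟨h, _⟩ <;>
    rw [parDist, h]
  · calc dist x.1 z.1 ≤ dist x.1 y.1 + dist y.1 z.1 := dist_triangle _ _ _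
      _ ≤ _ := add_le_add (le_max_left _ _) (le_max_left _ _)
  · have h1 : |x.2 - z.2| ^ p⁻¹ ≤ (|x.2 - y.2| + |y.2 - z.2|) ^ p⁻¹ := by
      apply Real.rpow_le_rpow (abs_nonneg _) _ (by positivity)
      calc |x.2 - z.2| = |(x.2 - y.2) + (y.2 - z.2)| := by ring_nf
        _ ≤ _ := abs_add_le _ _
    have h2 := rpow_inv_subadd hp (abs_nonneg (x.2 - y.2)) (abs_nonneg (y.2 - z.2))
    calc |x.2 - z.2| ^ p⁻¹ ≤ |x.2 - y.2| ^ p⁻¹ + |y.2 - z.2| ^ p⁻¹ := h1.trans h2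
      _ ≤ _ := add_le_add (le_max_right _ _) (le_max_right _ _)

lemma isOpen_iff_par (hp : 1 ≤ p) (s : Set ((Fin n → ℝ) × ℝ)) :
    IsOpen s ↔ ∀ x ∈ s, ∃ ε > 0, ∀ y, parDist p x y < ε → y ∈ s := by
  have hp0 : 0 < p := lt_of_lt_of_le one_pos hp
  rw [Metric.isOpen_iff]
  constructor
  · intro h x hx
    obtain ⟨ε, hε, hb⟩ := h x hx
    refine ⟨min ε (ε ^ p⁻¹), lt_min hε (Real.rpow_pos_of_pos hε _), fun y hy => ?_⟩
    apply hb
    rw [mem_ball, Prod.dist_eq, dist_comm, max_lt_iff]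
    constructor
    · exact lt_of_le_of_lt (le_max_left _ _) (lt_of_lt_of_le hy (min_le_left _ _))
    · have h2 : |x.2 - y.2| ^ p⁻¹ < ε ^ p⁻¹ :=
        lt_of_le_of_lt (le_max_right _ _) (lt_of_lt_of_le hy (min_le_right _ _))
      rw [Real.rpow_inv_lt_iff_of_pos (abs_nonneg _) (Real.rpow_nonneg hε.le _) hp0] at h2
      rw [← Real.rpow_mul hε.le, inv_mul_cancel₀ hp0.ne', Real.rpow_one] at h2
      rwa [Real.dist_eq, abs_sub_comm]
  · intro h x hx
    obtain ⟨ε, hε, hb⟩ := h x hx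
    refine ⟨min ε (ε ^ p), lt_min hε (Real.rpow_pos_of_pos hε _), fun y hy => ?_⟩
    apply hb
    rw [mem_ball, Prod.dist_eq, max_lt_iff] at hy
    rw [parDist, max_lt_iff]
    refine ⟨lt_of_eq_of_lt (dist_comm _ _) (lt_of_lt_of_le hy.1 (min_le_left _ _)), ?_⟩
    rw [Real.rpow_inv_lt_iff_of_pos (abs_nonneg _) hε.le hp0]
    calc |x.2 - y.2| = dist y.2 x.2 := by rw [Real.dist_eq, abs_sub_comm]
      _ < _ := lt_of_lt_of_le hy.2 (min_le_right _ _)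

/-- The parabolic pseudometric, with topology definitionally the standard one. -/
@[reducible]
def parMetric (n : ℕ) (p : ℝ) (hp : 1 ≤ p) : PseudoMetricSpace ((Fin n → ℝ) × ℝ) :=
  PseudoMetricSpace.ofDistTopology (parDist p) (parDist_self hp) parDist_comm
    (parDist_triangle hp) (isOpen_iff_par hp)

lemma parMetric_dist {hp : 1 ≤ p} (z w : (Fin n → ℝ) × ℝ) :
    @dist _ (parMetric n p hp).toDist z w = parDist p z w := rfl

lemma volume_box (a b : Fin n → ℝ) (c d : ℝ) :
    volume ((Set.pi univ fun i => Icc (a i) (b i)) ×ˢ Icc c d) =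
      (∏ i, ENNReal.ofReal (b i - a i)) * ENNReal.ofReal (d - c) := by
  rw [MeasureTheory.Measure.volume_eq_prod, MeasureTheory.Measure.prod_prod, Set.pi_univ_Icc,
    Real.volume_Icc_pi, Real.volume_Icc]

lemma parClosedBall_eq (hp : 1 ≤ p) (z : (Fin n → ℝ) × ℝ) {r : ℝ} (hr : 0 ≤ r) :
    @Metric.closedBall _ (parMetric n p hp) z r =
      (Set.pi univ fun i => Icc (z.1 i - r) (z.1 i + r)) ×ˢ
        Icc (z.2 - r ^ p) (z.2 + r ^ p) := by
  have hp0 : 0 < p := lt_of_lt_of_le one_pos hp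
  ext w
  rw [@Metric.mem_closedBall _ (parMetric n p hp), parMetric_dist, parDist, max_le_iff,
    mem_prod, Set.mem_pi]
  constructor
  · rintro ⟨h1, h2⟩
    refine ⟨fun i _ => ?_, ?_⟩
    · have := (dist_pi_le_iff hr).1 h1 i
      rw [Real.dist_eq, abs_le] at this
      exact mem_Icc.2 ⟨by linarith [this.1], by linarith [this.2]⟩
    · rw [Real.rpow_inv_le_iff_of_pos (abs_nonneg _) hr hp0, abs_le] at h2
      exact mem_Icc.2 ⟨by linarith [h2.1], by linarith [h2.2]⟩
  · rintro ⟨h1, h2⟩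
    have h2' := mem_Icc.1 h2
    refine ⟨(dist_pi_le_iff hr).2 fun i => ?_, ?_⟩
    · have := mem_Icc.1 (h1 i trivial)
      rw [Real.dist_eq, abs_le]; constructor <;> linarith [this.1, this.2]
    · rw [Real.rpow_inv_le_iff_of_pos (abs_nonneg _) hr hp0, abs_le]
      constructor <;> linarith [h2'.1, h2'.2]

lemma volume_parClosedBall (hp : 1 ≤ p) (z : (Fin n → ℝ) × ℝ) {r : ℝ} (hr : 0 ≤ r) :
    volume (@Metric.closedBall _ (parMetric n p hp) z r) =
      ENNReal.ofReal (2 * r) ^ n * ENNReal.ofReal (2 * r ^ p) := by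
  rw [parClosedBall_eq hp z hr, volume_box]
  have e1 : ∀ i : Fin n, z.1 i + r - (z.1 i - r) = 2 * r := fun i => by ring
  have e2 : z.2 + r ^ p - (z.2 - r ^ p) = 2 * r ^ p := by ring
  simp [e1, e2, Finset.prod_const]

lemma volume_parClosedBall3 (hp : 1 ≤ p) (z : (Fin n → ℝ) × ℝ) {r : ℝ} (hr : 0 ≤ r) :
    volume (@Metric.closedBall _ (parMetric n p hp) z (3 * r)) =
      ENNReal.ofReal 3 ^ n * ENNReal.ofReal (3 ^ p) *
        (ENNReal.ofReal (2 * r) ^ n * ENNReal.ofReal (2 * r ^ p)) := by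
  have hp0 : 0 < p := lt_of_lt_of_le one_pos hp
  rw [volume_parClosedBall hp z (by positivity)]
  have e1 : ENNReal.ofReal (2 * (3 * r)) = ENNReal.ofReal 3 * ENNReal.ofReal (2 * r) := by
    rw [← ENNReal.ofReal_mul (by norm_num)]; ring_nf
  have e2 : ENNReal.ofReal (2 * (3 * r) ^ p)
      = ENNReal.ofReal (3 ^ p) * ENNReal.ofReal (2 * r ^ p) := by
    rw [← ENNReal.ofReal_mul (Real.rpow_nonneg (by norm_num) _),
      Real.mul_rpow (by norm_num) hr]
    ring_nf
  rw [e1, e2, mul_pow]; ring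

lemma volume_pRm (n : ℕ) (p γ : ℝ) (x : Fin n → ℝ) (t L : ℝ) :
    volume (pRm n p γ x t L) =
      ENNReal.ofReal (2 * L) ^ n * ENNReal.ofReal ((1 - γ) * L ^ p) := by
  rw [pRm, pQ, MeasureTheory.Measure.volume_eq_prod, MeasureTheory.Measure.prod_prod,
    MeasureTheory.volume_pi_pi, Real.volume_Ico]
  have e1 : ∀ i : Fin n, volume (Ico (x i - L) (x i + L)) = ENNReal.ofReal (2 * L) := by
    intro i; rw [Real.volume_Ico]; congr 1; ring
  have e2 : t - γ * L ^ p - (t - L ^ p) = (1 - γ) * L ^ p := by ring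
  rw [Finset.prod_congr rfl fun i _ => e1 i, Finset.prod_const, e2]
  simp

lemma measurableSet_pRm (n : ℕ) (p γ : ℝ) (x : Fin n → ℝ) (t L : ℝ) :
    MeasurableSet (pRm n p γ x t L) :=
  (MeasurableSet.univ_pi fun _ => measurableSet_Ico).prod measurableSet_Ico

end ParAux

/-- if a nonempty proper subset `E ⊊ ℝ^{n+1}` is `γ`-FIT
parabolic weakly porous, then `E` has Lebesgue measure zero. -/
theorem stmt18 (n : ℕ) (hn : 1 ≤ n) (p γ : ℝ) (hp : 1 < p)
    (hγ : γ ∈ Ico (0 : ℝ) 1) (E : Set ((Fin n → ℝ) × ℝ))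
    (hne : E.Nonempty) (hproper : E ≠ Set.univ)
    (hpor : FITParWeaklyPorous n p γ E) :
    volume E = 0 := by
  classical
  by_contra h0
  obtain ⟨c, δ, hc, hδ, hpor'⟩ := hpor
  have hp1 : (1:ℝ) ≤ p := hp.le
  have hγ0 : 0 ≤ γ := hγ.1
  have hγ1 : γ < 1 := hγ.2
  have h1γ : 0 < 1 - γ := by linarith
  -- Step 1: the porosity measure estimate on every `R⁻`.
  have porbound : ∀ (x : Fin n → ℝ) (t L : ℝ), 0 < L →
      volume (E ∩ pRm n p γ x t L) ≤
        ENNReal.ofReal (1 - c) * volume (pRm n p γ x t L) := by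
    intro x t L hL
    obtain ⟨N, P, hN, hdy, hfree, hdisj, _, hsum⟩ := hpor' x t L hL
    have hPm : ∀ i, MeasurableSet (P i) := by
      intro i
      obtain ⟨-, j, y, s, τ, hPeq, -, -⟩ := hdy i
      rw [hPeq]
      exact (MeasurableSet.univ_pi fun _ => measurableSet_Ico).prod measurableSet_Ico
    have hUm : MeasurableSet (⋃ i, P i) := MeasurableSet.iUnion hPm
    have hUsub : (⋃ i, P i) ⊆ pRm n p γ x t L := iUnion_subset fun i => (hdy i).1
    have hUvol : ENNReal.ofReal c * volume (pRm n p γ x t L) ≤ volume (⋃ i, P i) := by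
      rw [measure_iUnion (Set.pairwise_univ.1 hdisj) hPm, tsum_fintype]
      exact hsum
    have hEsub : E ∩ pRm n p γ x t L ⊆ pRm n p γ x t L \ ⋃ i, P i := by
      rintro w ⟨hwE, hwR⟩
      refine ⟨hwR, fun hwU => ?_⟩
      obtain ⟨_, ⟨i, rfl⟩, hwP⟩ := hwU
      have : w ∈ P i ∩ E := ⟨hwP, hwE⟩
      rw [hfree i] at this
      exact this
    have hfin : volume (pRm n p γ x t L) ≠ ∞ := by
      rw [volume_pRm]
      exact ENNReal.mul_ne_top (ENNReal.pow_ne_top ENNReal.ofReal_ne_top)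
        ENNReal.ofReal_ne_top
    have hRsplit : volume (pRm n p γ x t L \ ⋃ i, P i) + volume (⋃ i, P i) =
        volume (pRm n p γ x t L) := by
      have := measure_inter_add_diff (μ := volume) (pRm n p γ x t L) hUm
      rwa [Set.inter_eq_self_of_subset_right hUsub, add_comm] at this
    have h2 : ENNReal.ofReal (1 - c) + ENNReal.ofReal c = 1 := by
      rw [← ENNReal.ofReal_add (by linarith [hc.2]) hc.1.le]
      norm_num
    have key : volume (E ∩ pRm n p γ x t L) + ENNReal.ofReal c * volume (pRm n p γ x t L)
        ≤ ENNReal.ofReal (1 - c) * volume (pRm n p γ x t L) +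
          ENNReal.ofReal c * volume (pRm n p γ x t L) := by
      calc volume (E ∩ pRm n p γ x t L) + ENNReal.ofReal c * volume (pRm n p γ x t L)
          ≤ volume (pRm n p γ x t L \ ⋃ i, P i) + volume (⋃ i, P i) :=
            add_le_add (measure_mono hEsub) hUvol
        _ = volume (pRm n p γ x t L) := hRsplit
        _ = (ENNReal.ofReal (1 - c) + ENNReal.ofReal c) * volume (pRm n p γ x t L) := by
            rw [h2, one_mul]
        _ = _ := by rw [add_mul]
    exact (ENNReal.add_le_add_iff_right (ENNReal.mul_ne_top ENNReal.ofReal_ne_top hfin)).1 key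
  -- Step 2: the parabolic Vitali family.
  have hone : (1:ℝ≥0∞) ≤ ENNReal.ofReal (2 / (1 - γ)) := by
    rw [ENNReal.one_le_ofReal, le_div_iff₀ h1γ]
    linarith
  set C : ℝ≥0 := (Real.toNNReal 3) ^ n * Real.toNNReal (3 ^ p) *
    Real.toNNReal (2 / (1 - γ)) with hCdef
  have hCcoe : (C : ℝ≥0∞) = ENNReal.ofReal 3 ^ n * ENNReal.ofReal (3 ^ p) *
      ENNReal.ofReal (2 / (1 - γ)) := by
    simp [hCdef, ENNReal.ofReal, ENNReal.coe_mul, ENNReal.coe_pow]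
  have hdoub : ∀ z : (Fin n → ℝ) × ℝ, ∃ᶠ r in nhdsWithin 0 (Ioi 0),
      volume (@Metric.closedBall _ (parMetric n p hp1) z (3 * r)) ≤
        C * volume (@Metric.closedBall _ (parMetric n p hp1) z r) := by
    intro z
    apply Filter.Eventually.frequently
    filter_upwards [self_mem_nhdsWithin] with r hr
    have hr0 : (0:ℝ) ≤ r := (mem_Ioi.1 hr).le
    rw [volume_parClosedBall3 hp1 z hr0, volume_parClosedBall hp1 z hr0, hCcoe]
    exact mul_le_mul_left (le_mul_of_one_le_right zero_le hone) _
  set v : @VitaliFamily ((Fin n → ℝ) × ℝ) (parMetric n p hp1) _ volume :=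
    @Vitali.vitaliFamily _ (parMetric n p hp1) _ inferInstance inferInstance volume
      inferInstance C hdoub with hv
  -- Step 3: a Lebesgue density point of `E`.
  have hrE : (volume.restrict E) ≠ 0 := by
    intro h
    apply h0
    have := congrArg (fun μ : Measure ((Fin n → ℝ) × ℝ) => μ univ) h
    simpa [Measure.restrict_apply_univ] using this
  haveI : (MeasureTheory.ae (volume.restrict E)).NeBot := MeasureTheory.ae_neBot.2 hrE
  obtain ⟨z, hz⟩ := (@VitaliFamily.ae_tendsto_measure_inter_div _ (parMetric n p hp1) _
    volume v inferInstance inferInstance inferInstance E).exists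
  have hξ1 : ENNReal.ofReal (1 - c) < 1 := ENNReal.ofReal_lt_one.2 (by linarith [hc.1])
  have ev := (tendsto_order.1 hz).1 _ hξ1
  rw [@VitaliFamily.eventually_filterAt_iff _ (parMetric n p hp1) _ volume v _ _] at ev
  obtain ⟨ε, hε, hev⟩ := ev
  set L : ℝ := min ε 1 with hLdef
  have hL : 0 < L := lt_min hε one_pos
  have hLε : L ≤ ε := min_le_left _ _
  have hLp : 0 < L ^ p := Real.rpow_pos_of_pos hL p
  set R : Set ((Fin n → ℝ) × ℝ) := pRm n p γ z.1 (z.2 + (1 + γ) * L ^ p / 2) L with hR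
  set a : Set ((Fin n → ℝ) × ℝ) := (Set.pi univ fun i => Icc (z.1 i - L) (z.1 i + L)) ×ˢ
    Icc (z.2 - (1 - γ) * L ^ p / 2) (z.2 + (1 - γ) * L ^ p / 2) with ha
  have hRa : R ⊆ a := by
    rintro w ⟨hw1, hw2⟩
    rw [pQ, Set.mem_pi] at hw1
    constructor
    · intro i hi'
      have h := hw1 i hi'
      rw [mem_Ico] at h
      exact mem_Icc.2 ⟨h.1, h.2.le⟩
    · rw [mem_Ico] at hw2
      rw [mem_Icc]
      constructor <;> [linarith [hw2.1]; linarith [hw2.2]]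
  have hvola : volume a = ENNReal.ofReal (2 * L) ^ n *
      ENNReal.ofReal ((1 - γ) * L ^ p) := by
    rw [ha, volume_box]
    have e1 : ∀ i : Fin n, z.1 i + L - (z.1 i - L) = 2 * L := fun i => by ring
    have e2 : z.2 + (1 - γ) * L ^ p / 2 - (z.2 - (1 - γ) * L ^ p / 2) =
        (1 - γ) * L ^ p := by ring
    simp [e1, e2, Finset.prod_const]
  have hvolR : volume R = ENNReal.ofReal (2 * L) ^ n *
      ENNReal.ofReal ((1 - γ) * L ^ p) := by rw [hR, volume_pRm]
  have hvolRfin : volume R ≠ ∞ := by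
    rw [hvolR]
    exact ENNReal.mul_ne_top (ENNReal.pow_ne_top ENNReal.ofReal_ne_top) ENNReal.ofReal_ne_top
  have hdiffR : volume (a \ R) = 0 := by
    rw [measure_diff hRa (measurableSet_pRm n p γ _ _ _).nullMeasurableSet hvolRfin,
      hvolR, hvola, tsub_self]
  have hbound : volume (E ∩ a) ≤ ENNReal.ofReal (1 - c) * volume a := by
    calc volume (E ∩ a) ≤ volume ((E ∩ R) ∪ (a \ R)) := by
          apply measure_mono
          rintro w ⟨hwE, hwa⟩
          by_cases hwR : w ∈ R
          · exact Or.inl ⟨hwE, hwR⟩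
          · exact Or.inr ⟨hwa, hwR⟩
      _ ≤ volume (E ∩ R) + volume (a \ R) := measure_union_le _ _
      _ = volume (E ∩ R) := by rw [hdiffR, add_zero]
      _ ≤ ENNReal.ofReal (1 - c) * volume R := porbound z.1 _ L hL
      _ = ENNReal.ofReal (1 - c) * volume a := by rw [hvolR, hvola]
  have hsubL : a ⊆ @Metric.closedBall _ (parMetric n p hp1) z L := by
    rw [parClosedBall_eq hp1 z hL.le]
    have htemp : (1 - γ) * L ^ p ≤ 1 * L ^ p :=
      mul_le_mul_of_nonneg_right (by linarith) hLp.le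
    apply Set.prod_mono subset_rfl
    apply Icc_subset_Icc <;> linarith
  have haset : a ∈ @VitaliFamily.setsAt _ (parMetric n p hp1) _ volume v z := by
    refine ⟨?_, ?_, L, hsubL, ?_⟩
    · exact (isClosed_set_pi fun i _ => isClosed_Icc).prod isClosed_Icc
    · have hopen : IsOpen ((Set.pi univ fun i => Ioo (z.1 i - L) (z.1 i + L)) ×ˢ
          Ioo (z.2 - (1 - γ) * L ^ p / 2) (z.2 + (1 - γ) * L ^ p / 2)) :=
        (isOpen_set_pi finite_univ fun i _ => isOpen_Ioo).prod isOpen_Ioo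
      have hzin : z ∈ (Set.pi univ fun i => Ioo (z.1 i - L) (z.1 i + L)) ×ˢ
          Ioo (z.2 - (1 - γ) * L ^ p / 2) (z.2 + (1 - γ) * L ^ p / 2) := by
        constructor
        · intro i _
          exact mem_Ioo.2 ⟨by linarith, by linarith⟩
        · have hpos : 0 < (1 - γ) * L ^ p / 2 := by positivity
          exact mem_Ioo.2 ⟨by linarith, by linarith⟩
      have hss : (Set.pi univ fun i => Ioo (z.1 i - L) (z.1 i + L)) ×ˢ
          Ioo (z.2 - (1 - γ) * L ^ p / 2) (z.2 + (1 - γ) * L ^ p / 2) ⊆ a := by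
        apply Set.prod_mono
        · exact Set.pi_mono fun i _ => Ioo_subset_Icc_self
        · exact Ioo_subset_Icc_self
      exact ⟨z, interior_maximal hss hopen hzin⟩
    · rw [volume_parClosedBall3 hp1 z hL.le, hvola, hCcoe]
      have e : ENNReal.ofReal (2 / (1 - γ)) * ENNReal.ofReal ((1 - γ) * L ^ p) =
          ENNReal.ofReal (2 * L ^ p) := by
        rw [← ENNReal.ofReal_mul (div_nonneg (by norm_num) h1γ.le)]
        congr 1
        field_simp
      apply le_of_eq
      rw [← e]
      ring
  have hasub : a ⊆ @Metric.closedBall _ (parMetric n p hp1) z ε :=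
    hsubL.trans (@Metric.closedBall_subset_closedBall _ (parMetric n p hp1) _ _ _ hLε)
  have hlt := hev a haset hasub
  have hvola0 : volume a ≠ 0 := by
    rw [hvola]
    apply mul_ne_zero
    · exact pow_ne_zero _ (ENNReal.ofReal_pos.2 (by linarith)).ne'
    · exact (ENNReal.ofReal_pos.2 (by positivity)).ne'
  have hle : volume (E ∩ a) / volume a ≤ ENNReal.ofReal (1 - c) :=
    ENNReal.div_le_of_le_mul hbound
  exact absurd (lt_of_lt_of_le hlt hle) (lt_irrefl _)
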